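/- Every mixed half-space is a tropical hemispace; that is, if H ⊆ ℝmaxⁿ is the solution set of a single mixed tropical affine inequality and H is a non-empty proper subset of ℝmaxⁿ, then both H and its complement ℝmaxⁿ ∖ H are tropically convex. -/

import Mathlib

attribute [local instance] Classical.propDecidable

/-- The germ semiring `𝔾 = ℝmax ∪ {+∞} ∪ ℝ⁻`: `negInf` is `-∞`, `fin a` is the
real number `a` (an element of `ℝmax`), `germ a` is the germ `a̲ ∈ ℝ⁻`, and
`posInf` is `+∞`. -/
inductive TGerm where
  | negInf : TGerm
  | fin : ℝ → TGerm
  | germ : ℝ → TGerm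
  | posInf : TGerm

namespace TGerm

/-- The modulus `|x| ∈ ℝmax ∪ {+∞} = EReal` of an element of `𝔾`. -/
noncomputable def modulus : TGerm → EReal
  | negInf => ⊥
  | fin a => (a : EReal)
  | germ a => (a : EReal)
  | posInf => ⊤

/-- Whether `x` belongs to the copy `ℝ⁻` of perturbed reals. -/
def isPert : TGerm → Bool
  | germ _ => true
  | _ => false

/-- The total order `≤𝔾` on `𝔾`: `x ≤𝔾 y` iff `|x| < |y|` when
`x ∈ ℝmax ∪ {+∞}` and `y ∈ ℝ⁻`, and `|x| ≤ |y|` otherwise. -/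
def gle (x y : TGerm) : Prop :=
  if isPert x = false ∧ isPert y = true then modulus x < modulus y
  else modulus x ≤ modulus y

/-- The valuation `x(ε) ∈ ℝmax ∪ {+∞} = EReal` of `x ∈ 𝔾` at `ε`. -/
noncomputable def val : TGerm → ℝ → EReal
  | negInf, _ => ⊥
  | fin a, _ => (a : EReal)
  | germ a, ε => ((a - ε : ℝ) : EReal)
  | posInf, _ => ⊤

/-- The addition `⊕` of `𝔾`: the maximum with respect to `≤𝔾`. -/
noncomputable def add (x y : TGerm) : TGerm := if gle x y then y else x

/-- The minimum with respect to `≤𝔾`. -/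
noncomputable def gmin (x y : TGerm) : TGerm := if gle x y then x else y

/-- The tropical sum `⊕ᵢ f i` of a finite family in `𝔾`. -/
noncomputable def gsum {n : ℕ} (f : Fin n → TGerm) : TGerm :=
  (List.ofFn f).foldr add negInf

/-- The minimum (w.r.t. `≤𝔾`) of a finite family in `𝔾`. -/
noncomputable def ginf {n : ℕ} (f : Fin n → TGerm) : TGerm :=
  (List.ofFn f).foldr gmin posInf

/-- The multiplication `⊗` of `𝔾`. -/
def mul : TGerm → TGerm → TGerm
  | negInf, _ => negInf
  | _, negInf => negInf
  | posInf, _ => posInf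
  | _, posInf => posInf
  | fin a, fin b => fin (a + b)
  | fin a, germ b => germ (a + b)
  | germ a, fin b => germ (a + b)
  | germ a, germ b => germ (a + b)

end TGerm

/-- The embedding of `ℝmax = ℝ ∪ {-∞}` into the germ semiring `𝔾`. -/
def toGerm (x : WithBot ℝ) : TGerm := WithBot.recBotCoe TGerm.negInf TGerm.fin x

/-- The embedding of `ℝmax = ℝ ∪ {-∞}` into `ℝmax ∪ {+∞} = EReal`. -/
noncomputable def rmaxToEReal (x : WithBot ℝ) : EReal :=
  WithBot.recBotCoe ⊥ (fun a : ℝ => (a : EReal)) x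

/-- A subset of `ℝmaxⁿ` is tropically convex. -/
def TropConvex {n : ℕ} (C : Set (Fin n → WithBot ℝ)) : Prop :=
  ∀ u ∈ C, ∀ v ∈ C, ∀ lam mu : WithBot ℝ, max lam mu = 0 →
    (fun i => max (lam + u i) (mu + v i)) ∈ C

/-- A subset of `ℝmaxⁿ` is a tropical polyhedron with mixed constraints: it is
the solution set of finitely many mixed tropical affine inequalities
`a₀ ⊕ a₁x₁ ⊕ ⋯ ⊕ aₙxₙ ≤𝔾 b₀ ⊕ b₁x₁ ⊕ ⋯ ⊕ bₙxₙ` with `aᵢ ∈ ℝmax`, `bᵢ ∈ 𝔾`. -/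
def IsMixedPoly {n : ℕ} (P : Set (Fin n → WithBot ℝ)) : Prop :=
  ∃ (p : ℕ) (a₀ : Fin p → WithBot ℝ) (a : Fin p → Fin n → WithBot ℝ)
    (b₀ : Fin p → TGerm) (b : Fin p → Fin n → TGerm),
    P = { x | ∀ k,
      (TGerm.add (toGerm (a₀ k))
          (TGerm.gsum fun i => (toGerm (a k i)).mul (toGerm (x i)))).gle
        (TGerm.add (b₀ k) (TGerm.gsum fun i => (b k i).mul (toGerm (x i)))) }

/-!
For `max λ μ = 0` a mixed affine form `f(x) = c₀ ⊕ c₁x₁ ⊕ ⋯ ⊕ cₙxₙ` satisfies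
`f(λu ⊕ μv) = λf(u) ⊕ μf(v)`, because `c₀ = λc₀ ⊕ μc₀`. Hence `{f ≤ g}` and its complement
`{g < f}` are tropically convex: multiplication by `λ ∈ ℝmax` is monotone on `𝔾`, and strictly
monotone unless `λ = -∞`, in which case `μ = 0` and the other term dominates.
-/

namespace TGerm

/-- `≤𝔾` is the lexicographic order on `(|x|, x ∉ ℝ⁻)`: at equal modulus a germ `α̲`
lies just below `α`. -/
noncomputable def orderKey (x : TGerm) : EReal ×ₗ Bool := toLex (x.modulus, !x.isPert)

theorem orderKey_injective : Function.Injective orderKey := by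
  intro x y h
  cases x <;> cases y <;> simp_all [orderKey, modulus, isPert]

theorem gle_iff_orderKey_le (x y : TGerm) : gle x y ↔ orderKey x ≤ orderKey y := by
  cases x <;> cases y <;>
    simp [gle, orderKey, modulus, isPert, Prod.Lex.toLex_le_toLex, ← le_iff_lt_or_eq]

noncomputable instance : LinearOrder TGerm := LinearOrder.lift' orderKey orderKey_injective

theorem le_iff_gle {x y : TGerm} : x ≤ y ↔ gle x y := (gle_iff_orderKey_le x y).symm

instance : OrderBot TGerm where
  bot := negInf
  bot_le x := by cases x <;> simp [le_iff_gle, gle, modulus, isPert]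

theorem add_eq_max (x y : TGerm) : add x y = max x y := by
  simp only [add, max_def, le_iff_gle]

instance : CommMonoid TGerm where
  mul := mul
  one := fin 0
  mul_assoc x y z := by
    cases x <;> cases y <;> cases z <;> simp only [HMul.hMul, Mul.mul, mul, add_assoc]
  one_mul x := by cases x <;> simp only [HMul.hMul, Mul.mul, mul, zero_add]
  mul_one x := by cases x <;> simp only [HMul.hMul, Mul.mul, mul, add_zero]
  mul_comm x y := by cases x <;> cases y <;> simp only [HMul.hMul, Mul.mul, mul, add_comm]

theorem mul_eq (x y : TGerm) : x.mul y = x * y := rfl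

theorem one_def : (1 : TGerm) = fin 0 := rfl

instance : MulLeftMono TGerm where
  elim c x y h := by
    simp only [le_iff_gle] at h ⊢
    cases c <;> cases x <;> cases y <;>
      simp_all [HMul.hMul, Mul.mul, mul, gle, isPert, modulus] <;> (try norm_cast) <;> linarith

theorem isUnit_fin (l : ℝ) : IsUnit (fin l) :=
  isUnit_iff_exists.2
    ⟨fin (-l), by simp [← mul_eq, mul, one_def], by simp [← mul_eq, mul, one_def]⟩

theorem fin_mul_strictMono (l : ℝ) : StrictMono (fin l * ·) :=
  mul_right_mono.strictMono_of_injective (isUnit_fin l).mul_right_injective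

theorem gsum_succ {n : ℕ} (f : Fin (n + 1) → TGerm) :
    gsum f = max (f 0) (gsum fun i : Fin n => f i.succ) := by
  simp [gsum, List.ofFn_succ, add_eq_max]

theorem gsum_max {n : ℕ} (f g : Fin n → TGerm) :
    gsum (fun i => max (f i) (g i)) = max (gsum f) (gsum g) := by
  induction n with
  | zero => exact (max_self _).symm
  | succ m ih => rw [gsum_succ, gsum_succ f, gsum_succ g, ih, max_max_max_comm]

theorem mul_gsum {n : ℕ} (c : TGerm) (f : Fin n → TGerm) :
    c * gsum f = gsum fun i => c * f i := by
  induction n with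
  | zero => cases c <;> rfl
  | succ m ih => rw [gsum_succ, gsum_succ, ← max_mul_mul_left, ih]

end TGerm

open TGerm

theorem toGerm_zero : toGerm 0 = 1 := rfl

theorem toGerm_bot_mul (x : TGerm) : toGerm ⊥ * x = ⊥ := by cases x <;> rfl

theorem toGerm_add (p q : WithBot ℝ) : toGerm (p + q) = toGerm p * toGerm q := by
  cases p <;> cases q <;> rfl

theorem toGerm_mono : Monotone toGerm := by
  intro p q h
  cases p <;> cases q
  · exact le_rfl
  · exact bot_le
  · exact absurd h (by simp)
  · simpa [toGerm, le_iff_gle, gle, modulus, isPert] using h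

theorem max_toGerm_mul_self {lam mu : WithBot ℝ} (hmax : max lam mu = 0) (c : TGerm) :
    max (toGerm lam * c) (toGerm mu * c) = c := by
  rw [max_mul_mul_right, ← toGerm_mono.map_max, hmax, toGerm_zero, one_mul]

noncomputable def mixedAffine {n : ℕ} (c₀ : TGerm) (c : Fin n → TGerm)
    (x : Fin n → WithBot ℝ) : TGerm :=
  add c₀ (gsum fun i => (c i).mul (toGerm (x i)))

theorem mixedAffine_tropComb {n : ℕ} (c₀ : TGerm) (c : Fin n → TGerm)
    (u v : Fin n → WithBot ℝ) {lam mu : WithBot ℝ} (hmax : max lam mu = 0) :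
    mixedAffine c₀ c (fun i => max (lam + u i) (mu + v i)) =
      max (toGerm lam * mixedAffine c₀ c u) (toGerm mu * mixedAffine c₀ c v) := by
  have hterm : ∀ i, c i * toGerm (max (lam + u i) (mu + v i)) =
      max (toGerm lam * (c i * toGerm (u i))) (toGerm mu * (c i * toGerm (v i))) := by
    intro i
    rw [toGerm_mono.map_max, toGerm_add, toGerm_add, ← max_mul_mul_left,
      mul_left_comm (c i), mul_left_comm (c i)]
  simp only [mixedAffine, mul_eq, add_eq_max, hterm, gsum_max, ← mul_gsum,
    ← max_mul_mul_left]
  conv_lhs => rw [← max_toGerm_mul_self hmax c₀]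
  exact max_max_max_comm _ _ _ _

theorem toGerm_mul_lt_max {lam mu : WithBot ℝ} (hmax : max lam mu = 0)
    {x x' y y' : TGerm} (hx : x < x') (hy : y < y') :
    toGerm lam * x < max (toGerm lam * x') (toGerm mu * y') := by
  cases lam with
  | bot =>
    obtain rfl : mu = 0 := by simpa using hmax
    rw [toGerm_bot_mul, toGerm_zero, one_mul]
    exact bot_le.trans_lt (hy.trans_le (le_max_right _ _))
  | coe l => exact (fin_mul_strictMono l hx).trans_le (le_max_left _ _)

section

variable {n : ℕ} {c₀ d₀ : TGerm} {c d : Fin n → TGerm}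

theorem tropConvex_setOf_mixedAffine_le :
    TropConvex {x | mixedAffine c₀ c x ≤ mixedAffine d₀ d x} := by
  intro u hu v hv lam mu hmax
  simp only [Set.mem_ofPred_eq, mixedAffine_tropComb _ _ u v hmax] at hu hv ⊢
  exact max_le_max (mul_le_mul_right hu _) (mul_le_mul_right hv _)

theorem tropConvex_setOf_mixedAffine_lt :
    TropConvex {x | mixedAffine c₀ c x < mixedAffine d₀ d x} := by
  intro u hu v hv lam mu hmax
  simp only [Set.mem_ofPred_eq, mixedAffine_tropComb _ _ u v hmax] at hu hv ⊢
  refine max_lt (toGerm_mul_lt_max hmax hu hv) ?_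
  rw [max_comm] at hmax ⊢
  exact toGerm_mul_lt_max hmax hv hu

end

theorem statement_12_general (n : ℕ) (a₀ : WithBot ℝ) (a : Fin n → WithBot ℝ)
    (b₀ : TGerm) (b : Fin n → TGerm)
    (H : Set (Fin n → WithBot ℝ))
    (hH : H = { x | (TGerm.add (toGerm a₀)
                      (TGerm.gsum fun i => (toGerm (a i)).mul (toGerm (x i)))).gle
                    (TGerm.add b₀ (TGerm.gsum fun i => (b i).mul (toGerm (x i)))) }) :
    TropConvex H ∧ TropConvex Hᶜ := by
  have hH' : H = {x | mixedAffine (toGerm a₀) (toGerm ∘ a) x ≤ mixedAffine b₀ b x} := by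
    simp only [hH, le_iff_gle]
    rfl
  subst hH'
  refine ⟨tropConvex_setOf_mixedAffine_le, ?_⟩
  simpa only [Set.compl_ofPred, not_le] using tropConvex_setOf_mixedAffine_lt

theorem statement_12 (n : ℕ) (a₀ : WithBot ℝ) (a : Fin n → WithBot ℝ)
    (b₀ : TGerm) (b : Fin n → TGerm)
    (H : Set (Fin n → WithBot ℝ))
    (hH : H = { x | (TGerm.add (toGerm a₀)
                      (TGerm.gsum fun i => (toGerm (a i)).mul (toGerm (x i)))).gle
                    (TGerm.add b₀ (TGerm.gsum fun i => (b i).mul (toGerm (x i)))) })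
    (hne : H.Nonempty) (hproper : H ≠ Set.univ) :
    TropConvex H ∧ TropConvex Hᶜ :=
  statement_12_general n a₀ a b₀ b H hH
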